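/- Let μ ∈ ℝ, let I ⊆ ℝ be an open interval, and let u : I × ℝ² → ℂ be smooth, solve i ∂_t u + Δu = μ |u|² u on I × ℝ², and be such that for every compact time interval J ⊆ I and every n, all partial derivatives of u of order ≤ n in (t,x) decay faster than any polynomial in x, uniformly for t ∈ J. Then the energy E(u(t)) := ∫_{ℝ²} (1/2)|∇u(t,x)|² + (μ/4)|u(t,x)|⁴ dx is constant on I. -/

import Mathlib

open MeasureTheory

noncomputable section

/-- The plane `ℝ²`. -/
abbrev R2 := EuclideanSpace ℝ (Fin 2)

/-- The `i`-th spatial partial derivative of `u(t, ·)` at `x`. -/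
def spatialDeriv (u : ℝ × R2 → ℂ) (t : ℝ) (x : R2) (i : Fin 2) : ℂ :=
  fderiv ℝ (fun y => u (t, y)) x (EuclideanSpace.single i 1)

/-- The spatial Laplacian of `u(t, ·)` at `x`. -/
def laplacian (u : ℝ × R2 → ℂ) (t : ℝ) (x : R2) : ℂ :=
  ∑ i, fderiv ℝ (fun y => spatialDeriv u t y i) x (EuclideanSpace.single i 1)

/-- The energy `E(u(t)) = ∫ (1/2)|∇u(t,x)|² + (μ/4)|u(t,x)|⁴ dx`. -/
def energy (μ : ℝ) (u : ℝ × R2 → ℂ) (t : ℝ) : ℝ :=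
  ∫ x : R2, (1 / 2) * (∑ i, ‖spatialDeriv u t x i‖ ^ 2) + (μ / 4) * ‖u (t, x)‖ ^ 4

open Set Filter Topology

lemma integral_deriv_zero_line (h h' : ℝ → ℝ) (hd : ∀ s, HasDerivAt h (h' s) s)
    (hint : Integrable h') (htop : Tendsto h atTop (nhds 0))
    (hbot : Tendsto h atBot (nhds 0)) : ∫ s, h' s = 0 := by
  have h1 : ∫ s in Set.Iic (0:ℝ), h' s = h 0 - 0 :=
    MeasureTheory.integral_Iic_of_hasDerivAt_of_tendsto
      (hd 0).continuousAt.continuousWithinAt (fun x _ => hd x) hint.integrableOn hbot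
  have h2 : ∫ s in Set.Ioi (0:ℝ), h' s = 0 - h 0 :=
    MeasureTheory.integral_Ioi_of_hasDerivAt_of_tendsto
      (hd 0).continuousAt.continuousWithinAt (fun x _ => hd x) hint.integrableOn htop
  rw [← intervalIntegral.integral_Iic_add_Ioi (b := (0:ℝ)) hint.integrableOn hint.integrableOn,
    h1, h2]
  ring

/-- The parametrization of `R2` by `ℝ × ℝ`. -/
def P : ℝ × ℝ → R2 := fun z => (EuclideanSpace.equiv (Fin 2) ℝ).symm ![z.1, z.2]

lemma P_measurePreserving : MeasurePreserving (fun x : R2 => ((x 0 : ℝ), (x 1 : ℝ))) := by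
  have h1 := EuclideanSpace.volume_preserving_symm_measurableEquiv_toLp (Fin 2)
  have h2 := MeasureTheory.volume_preserving_finTwoArrow ℝ
  exact (h2.comp h1 : _)

lemma P_symm (x : R2) : P ((x 0 : ℝ), (x 1 : ℝ)) = x := by
  ext j; fin_cases j <;> rfl

lemma P_integral_comp (g : R2 → ℝ) : ∫ z : ℝ × ℝ, g (P z) = ∫ x : R2, g x := by
  have := P_measurePreserving.integral_comp
    ((((MeasurableEquiv.toLp 2 (Fin 2 → ℝ)).symm).trans MeasurableEquiv.finTwoArrow).measurableEmbedding)
    (fun z : ℝ × ℝ => g (P z))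
  rw [← this]
  refine integral_congr_ae (Eventually.of_forall fun x => ?_)
  simp [P_symm]

lemma P_norm_fst (z : ℝ × ℝ) : |z.1| ≤ ‖P z‖ := by
  have : |(P z) 0| ≤ ‖P z‖ := by
    rw [EuclideanSpace.norm_eq, ← Real.sqrt_sq_eq_abs ((P z) 0)]
    apply Real.sqrt_le_sqrt
    exact Finset.single_le_sum (f := fun i => ‖(P z) i‖^2) (fun i _ => by positivity) (Finset.mem_univ 0) |>.trans_eq' (by simp [Real.norm_eq_abs, sq_abs])
  simpa [P] using this

lemma P_norm_snd (z : ℝ × ℝ) : |z.2| ≤ ‖P z‖ := by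
  have : |(P z) 1| ≤ ‖P z‖ := by
    rw [EuclideanSpace.norm_eq, ← Real.sqrt_sq_eq_abs ((P z) 1)]
    apply Real.sqrt_le_sqrt
    exact Finset.single_le_sum (f := fun i => ‖(P z) i‖^2) (fun i _ => by positivity) (Finset.mem_univ 1) |>.trans_eq' (by simp [Real.norm_eq_abs, sq_abs])
  simpa [P] using this

lemma P_line_fst (y : ℝ) (s : ℝ) :
    HasDerivAt (fun s => P (s, y)) (EuclideanSpace.single 0 (1:ℝ)) s := by
  have : (fun s : ℝ => P (s, y)) = fun s => P (0, y) + s • EuclideanSpace.single 0 (1:ℝ) := by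
    funext s; ext j; fin_cases j <;> simp [P]
  rw [this]
  simpa using ((hasDerivAt_id s).smul_const (EuclideanSpace.single 0 (1:ℝ))).const_add (P (0, y))

lemma P_line_snd (x : ℝ) (s : ℝ) :
    HasDerivAt (fun s => P (x, s)) (EuclideanSpace.single 1 (1:ℝ)) s := by
  have : (fun s : ℝ => P (x, s)) = fun s => P (x, 0) + s • EuclideanSpace.single 1 (1:ℝ) := by
    funext s; ext j; fin_cases j <;> simp [P]
  rw [this]
  simpa using ((hasDerivAt_id s).smul_const (EuclideanSpace.single 1 (1:ℝ))).const_add (P (x, 0))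

lemma decay_tendsto {C : ℝ} {h : ℝ → ℝ} (hb : ∀ s : ℝ, |h s| ≤ C * (1 + |s|) ^ (-(3:ℝ))) :
    Tendsto h atTop (nhds 0) ∧ Tendsto h atBot (nhds 0) := by
  have h2 : Tendsto (fun r : ℝ => r ^ (-(3:ℝ))) atTop (nhds 0) :=
    tendsto_rpow_neg_atTop (by norm_num)
  constructor
  · have h1 : Tendsto (fun s : ℝ => 1 + |s|) atTop atTop :=
      tendsto_atTop_add_const_left _ 1 tendsto_abs_atTop_atTop
    refine squeeze_zero_norm (fun s => hb s) ?_
    simpa using (h2.comp h1).const_mul C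
  · have h1 : Tendsto (fun s : ℝ => 1 + |s|) atBot atTop :=
      tendsto_atTop_add_const_left _ 1 tendsto_abs_atBot_atTop
    refine squeeze_zero_norm (fun s => hb s) ?_
    simpa using (h2.comp h1).const_mul C

lemma rpow_bound_mono {C s t : ℝ} (hC : 0 ≤ C) (hst : 0 ≤ s) (h : s ≤ t) :
    C * (1 + t) ^ (-(3:ℝ)) ≤ C * (1 + s) ^ (-(3:ℝ)) := by
  apply mul_le_mul_of_nonneg_left _ hC
  apply Real.rpow_le_rpow_of_nonpos (by linarith) (by linarith) (by norm_num)

lemma integral_fderiv_single_zero (f : R2 → ℝ) (C : ℝ) (i : Fin 2)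
    (hf : ContDiff ℝ 1 f)
    (hb : ∀ x : R2, |f x| ≤ C * (1 + ‖x‖) ^ (-(3:ℝ)))
    (hb' : ∀ x : R2, ‖fderiv ℝ f x (EuclideanSpace.single i 1)‖ ≤ C * (1 + ‖x‖) ^ (-(3:ℝ))) :
    ∫ x : R2, fderiv ℝ f x (EuclideanSpace.single i 1) = 0 := by
  have hC : 0 ≤ C := by
    have := (abs_nonneg (f 0)).trans (hb 0)
    simpa using this
  set g' : R2 → ℝ := fun x => fderiv ℝ f x (EuclideanSpace.single i 1) with hg'
  have hcont : Continuous g' := (hf.continuous_fderiv one_ne_zero).clm_apply continuous_const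
  have hgb : ∀ x, ‖g' x‖ ≤ C * (1 + ‖x‖) ^ (-(3:ℝ)) := hb'
  have hint : Integrable g' := by
    refine Integrable.mono' ((integrable_one_add_norm (μ := volume) (E := R2)
      (r := 3) (by simp; norm_num)).const_mul C) hcont.aestronglyMeasurable ?_
    exact ae_of_all _ hgb
  have hembed : MeasurableEmbedding (fun x : R2 => ((x 0 : ℝ), (x 1 : ℝ))) :=
    (((MeasurableEquiv.toLp 2 (Fin 2 → ℝ)).symm).trans MeasurableEquiv.finTwoArrow).measurableEmbedding
  have hintP : Integrable (fun z : ℝ × ℝ => g' (P z)) := by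
    have h2 := (P_measurePreserving.integrable_comp_emb hembed
      (g := fun z : ℝ × ℝ => g' (P z)))
    rw [← h2]
    refine hint.congr (Eventually.of_forall fun x => ?_)
    simp [Function.comp, P_symm]
  have key := P_integral_comp g'
  rw [← key]
  rw [MeasureTheory.Measure.volume_eq_prod] at hintP ⊢
  fin_cases i
  · rw [MeasureTheory.integral_prod_symm _ hintP]
    rw [show (0:ℝ) = ∫ (y : ℝ), (0:ℝ) by simp]
    refine integral_congr_ae ?_
    filter_upwards [hintP.prod_left_ae] with y hy
    refine integral_deriv_zero_line (fun s => f (P (s, y))) _ ?_ hy ?_ ?_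
    · intro s
      exact ((hf.differentiable one_ne_zero (P (s, y))).hasFDerivAt).comp_hasDerivAt s (P_line_fst y s)
    all_goals {
      have hbnd : ∀ s : ℝ, |f (P (s, y))| ≤ C * (1 + |s|) ^ (-(3:ℝ)) := fun s =>
        (hb _).trans (rpow_bound_mono hC (abs_nonneg _) (P_norm_fst (s, y)))
      first
        | exact (decay_tendsto hbnd).1
        | exact (decay_tendsto hbnd).2 }
  · rw [MeasureTheory.integral_prod _ hintP]
    rw [show (0:ℝ) = ∫ (x : ℝ), (0:ℝ) by simp]
    refine integral_congr_ae ?_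
    filter_upwards [hintP.prod_right_ae] with x hx
    refine integral_deriv_zero_line (fun s => f (P (x, s))) _ ?_ hx ?_ ?_
    · intro s
      exact ((hf.differentiable one_ne_zero (P (x, s))).hasFDerivAt).comp_hasDerivAt s (P_line_snd x s)
    all_goals {
      have hbnd : ∀ s : ℝ, |f (P (x, s))| ≤ C * (1 + |s|) ^ (-(3:ℝ)) := fun s =>
        (hb _).trans (rpow_bound_mono hC (abs_nonneg _) (P_norm_snd (x, s)))
      first
        | exact (decay_tendsto hbnd).1
        | exact (decay_tendsto hbnd).2 }

/-! ### Pointwise calculus for the solution -/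

def ut (u : ℝ × R2 → ℂ) (p : ℝ × R2) : ℂ := fderiv ℝ u p (1, 0)
def dxu (u : ℝ × R2 → ℂ) (i : Fin 2) (p : ℝ × R2) : ℂ :=
  fderiv ℝ u p (0, EuclideanSpace.single i 1)
def D2 (u : ℝ × R2 → ℂ) (p : ℝ × R2) := fderiv ℝ (fderiv ℝ u) p
def qf (u : ℝ × R2 → ℂ) (i : Fin 2) (p : ℝ × R2) : ℝ :=
  ((starRingEnd ℂ) (ut u p) * dxu u i p).re

section PtWise

variable {u : ℝ × R2 → ℂ} {a b : ℝ}
variable (hu : ContDiffOn ℝ (⊤ : ℕ∞) u (Set.Ioo a b ×ˢ Set.univ))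

lemma omega_open : IsOpen (Set.Ioo a b ×ˢ (Set.univ : Set R2)) := isOpen_Ioo.prod isOpen_univ

lemma mem_omega {t : ℝ} (ht : t ∈ Set.Ioo a b) (x : R2) :
    (t, x) ∈ Set.Ioo a b ×ˢ (Set.univ : Set R2) := ⟨ht, Set.mem_univ x⟩

include hu in
lemma cda {t : ℝ} (ht : t ∈ Set.Ioo a b) (x : R2) : ContDiffAt ℝ 3 u (t, x) :=
  (hu.contDiffAt (omega_open.mem_nhds (mem_omega ht x))).of_le (by exact WithTop.coe_le_coe.mpr le_top)

include hu in
lemma cdaD {t : ℝ} (ht : t ∈ Set.Ioo a b) (x : R2) :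
    ContDiffAt ℝ 2 (fderiv ℝ u) (t, x) :=
  ((hu.fderiv_of_isOpen omega_open (by exact WithTop.coe_le_coe.mpr le_top)).contDiffAt
    (omega_open.mem_nhds (mem_omega ht x)))

lemma slice_hasFDerivAt (t : ℝ) (x : R2) :
    HasFDerivAt (fun y : R2 => (t, y))
      ((0 : R2 →L[ℝ] ℝ).prod (ContinuousLinearMap.id ℝ R2)) x :=
  (hasFDerivAt_const t x).prodMk (hasFDerivAt_id x)

lemma tline_hasDerivAt (t : ℝ) (x : R2) :
    HasDerivAt (fun s : ℝ => (s, x)) ((1:ℝ), (0:R2)) t :=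
  (hasDerivAt_id t).prodMk (hasDerivAt_const t x)

include hu in
lemma P1 {t : ℝ} (ht : t ∈ Set.Ioo a b) (x : R2) (i : Fin 2) :
    spatialDeriv u t x i = dxu u i (t, x) := by
  have hdiff : DifferentiableAt ℝ u (t, x) :=
    (cda hu ht x).differentiableAt (by norm_num)
  have hs : HasFDerivAt (fun y : R2 => u (t, y))
      ((fderiv ℝ u (t, x)).comp ((0 : R2 →L[ℝ] ℝ).prod (ContinuousLinearMap.id ℝ R2))) x :=
    hdiff.hasFDerivAt.comp x (slice_hasFDerivAt t x)
  rw [spatialDeriv, hs.fderiv]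
  simp [dxu]

include hu in
lemma P2 {t : ℝ} (ht : t ∈ Set.Ioo a b) (x : R2) :
    HasDerivAt (fun s => u (s, x)) (ut u (t, x)) t := by
  have hdiff : DifferentiableAt ℝ u (t, x) :=
    (cda hu ht x).differentiableAt (by norm_num)
  have := hdiff.hasFDerivAt.comp_hasDerivAt t (tline_hasDerivAt t x)
  simpa [ut, Function.comp_def] using this

include hu in
lemma P3 {t : ℝ} (ht : t ∈ Set.Ioo a b) (x : R2) (i : Fin 2) :
    HasDerivAt (fun s => dxu u i (s, x))
      (D2 u (t, x) ((1:ℝ), (0:R2)) (0, EuclideanSpace.single i 1)) t := by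
  have hD : DifferentiableAt ℝ (fderiv ℝ u) (t, x) :=
    (cdaD hu ht x).differentiableAt (by norm_num)
  have hline : HasDerivAt (fun s => fderiv ℝ u (s, x)) (D2 u (t, x) ((1:ℝ), (0:R2))) t := by
    simpa [D2, Function.comp_def] using hD.hasFDerivAt.comp_hasDerivAt t (tline_hasDerivAt t x)
  have := hline.clm_apply (hasDerivAt_const t ((0 : ℝ × R2).1, EuclideanSpace.single i 1))
  simpa [dxu] using this

include hu in
lemma slice_fderiv_contDiff {t : ℝ} (ht : t ∈ Set.Ioo a b) :
    ContDiff ℝ 2 (fun y : R2 => fderiv ℝ u (t, y)) := by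
  have h1 : ContDiffOn ℝ 2 (fderiv ℝ u) (Set.Ioo a b ×ˢ Set.univ) :=
    hu.fderiv_of_isOpen omega_open (by exact WithTop.coe_le_coe.mpr le_top)
  have h2 : ContDiff ℝ 2 (fun y : R2 => (t, y)) := contDiff_const.prodMk contDiff_id
  have h3 := h1.comp (h2.contDiffOn (s := Set.univ))
    (fun y _ => mem_omega ht y)
  exact contDiffOn_univ.mp h3

include hu in
lemma slice_D2_contDiff {t : ℝ} (ht : t ∈ Set.Ioo a b) :
    ContDiff ℝ 1 (fun y : R2 => D2 u (t, y)) := by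
  have h1 : ContDiffOn ℝ 1 (fderiv ℝ (fderiv ℝ u)) (Set.Ioo a b ×ˢ Set.univ) :=
    (hu.fderiv_of_isOpen omega_open (m := 2) (by exact WithTop.coe_le_coe.mpr le_top)).fderiv_of_isOpen omega_open (by norm_num)
  have h2 : ContDiff ℝ 1 (fun y : R2 => (t, y)) := contDiff_const.prodMk contDiff_id
  have h3 := h1.comp (h2.contDiffOn (s := Set.univ)) (fun y _ => mem_omega ht y)
  exact contDiffOn_univ.mp h3

include hu in
lemma slice_u_contDiff {t : ℝ} (ht : t ∈ Set.Ioo a b) :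
    ContDiff ℝ 3 (fun y : R2 => u (t, y)) := by
  have h2 : ContDiff ℝ 3 (fun y : R2 => (t, y)) := contDiff_const.prodMk contDiff_id
  have h3 := ((hu.of_le (by exact WithTop.coe_le_coe.mpr le_top) : ContDiffOn ℝ 3 u _)).comp
    (h2.contDiffOn (s := Set.univ)) (fun y _ => mem_omega ht y)
  exact contDiffOn_univ.mp h3

include hu in
lemma slice_ut_contDiff {t : ℝ} (ht : t ∈ Set.Ioo a b) :
    ContDiff ℝ 2 (fun y : R2 => ut u (t, y)) :=
  (slice_fderiv_contDiff hu ht).clm_apply contDiff_const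

include hu in
lemma slice_dxu_contDiff {t : ℝ} (ht : t ∈ Set.Ioo a b) (i : Fin 2) :
    ContDiff ℝ 2 (fun y : R2 => dxu u i (t, y)) :=
  (slice_fderiv_contDiff hu ht).clm_apply contDiff_const

include hu in
lemma slice_qf_contDiff {t : ℝ} (ht : t ∈ Set.Ioo a b) (i : Fin 2) :
    ContDiff ℝ 1 (fun y : R2 => qf u i (t, y)) := by
  have h1 : ContDiff ℝ 1 (fun y : R2 => (starRingEnd ℂ) (ut u (t, y))) :=
    Complex.conjCLE.contDiff.comp ((slice_ut_contDiff hu ht).of_le (by norm_num))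
  have h2 := ((slice_dxu_contDiff hu ht i).of_le (by norm_num) : ContDiff ℝ 1 _)
  exact Complex.reCLM.contDiff.comp (h1.mul h2)

include hu in
lemma P4a {t : ℝ} (ht : t ∈ Set.Ioo a b) (x : R2) :
    ∃ L : R2 →L[ℝ] ℂ, HasFDerivAt (fun y => ut u (t, y)) L x ∧
      ∀ v, L v = D2 u (t, x) (0, v) ((1:ℝ), (0:R2)) := by
  have hD : DifferentiableAt ℝ (fderiv ℝ u) (t, x) :=
    (cdaD hu ht x).differentiableAt (by norm_num)
  have hM : HasFDerivAt (fun y : R2 => fderiv ℝ u (t, y))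
      ((D2 u (t, x)).comp ((0 : R2 →L[ℝ] ℝ).prod (ContinuousLinearMap.id ℝ R2))) x := by
    simpa [D2, Function.comp_def] using hD.hasFDerivAt.comp x (slice_hasFDerivAt t x)
  have h := hM.clm_apply (hasFDerivAt_const ((1:ℝ), (0:R2)) x)
  exact ⟨_, h, fun v => by simp [ut]⟩

include hu in
lemma P4b {t : ℝ} (ht : t ∈ Set.Ioo a b) (x : R2) (i : Fin 2) :
    ∃ L : R2 →L[ℝ] ℂ, HasFDerivAt (fun y => dxu u i (t, y)) L x ∧
      ∀ v, L v = D2 u (t, x) (0, v) (0, EuclideanSpace.single i 1) := by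
  have hD : DifferentiableAt ℝ (fderiv ℝ u) (t, x) :=
    (cdaD hu ht x).differentiableAt (by norm_num)
  have hM : HasFDerivAt (fun y : R2 => fderiv ℝ u (t, y))
      ((D2 u (t, x)).comp ((0 : R2 →L[ℝ] ℝ).prod (ContinuousLinearMap.id ℝ R2))) x := by
    simpa [D2, Function.comp_def] using hD.hasFDerivAt.comp x (slice_hasFDerivAt t x)
  have h := hM.clm_apply (hasFDerivAt_const ((0:ℝ), EuclideanSpace.single i (1:ℝ)) x)
  exact ⟨_, h, fun v => by simp [dxu]⟩

include hu in
lemma P4c {t : ℝ} (ht : t ∈ Set.Ioo a b) (x : R2) (i : Fin 2) :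
    ∃ L : R2 →L[ℝ] ℝ, HasFDerivAt (fun y => qf u i (t, y)) L x ∧
      ∀ v, L v =
        ((starRingEnd ℂ) (D2 u (t, x) (0, v) ((1:ℝ), (0:R2))) * dxu u i (t, x)).re
        + ((starRingEnd ℂ) (ut u (t, x)) * D2 u (t, x) (0, v) (0, EuclideanSpace.single i 1)).re := by
  obtain ⟨L1, hL1, hv1⟩ := P4a hu ht x
  obtain ⟨L2, hL2, hv2⟩ := P4b hu ht x i
  have hconj : HasFDerivAt (fun y => (starRingEnd ℂ) (ut u (t, y)))
      ((Complex.conjCLE : ℂ ≃L[ℝ] ℂ).toContinuousLinearMap.comp L1) x :=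
    ((Complex.conjCLE.toContinuousLinearMap).hasFDerivAt).comp x hL1
  have hmul := hconj.mul hL2
  have hre := (Complex.reCLM.hasFDerivAt).comp x hmul
  refine ⟨_, hre, fun v => ?_⟩
  simp [hv1, hv2, mul_comm]
  ring

end PtWise

lemma hasDerivAt_normSq_c {z : ℝ → ℂ} {z' : ℂ} {t : ℝ} (h : HasDerivAt z z' t) :
    HasDerivAt (fun s => ‖z s‖^2) (2 * ((starRingEnd ℂ) (z t) * z').re) t := by
  have hre : HasDerivAt (fun s => (z s).re) z'.re t :=
    (Complex.reCLM.hasFDerivAt).comp_hasDerivAt t h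
  have him : HasDerivAt (fun s => (z s).im) z'.im t :=
    (Complex.imCLM.hasFDerivAt).comp_hasDerivAt t h
  have heq : (fun s => ‖z s‖^2) = fun s => (z s).re^2 + (z s).im^2 := by
    funext s
    rw [Complex.sq_norm, Complex.normSq_apply]
    ring
  rw [heq]
  have := ((hre.pow 2).add (him.pow 2))
  refine this.congr_deriv ?_
  simp [Complex.mul_re]
  ring

def Fden (μ : ℝ) (u : ℝ × R2 → ℂ) (t : ℝ) (x : R2) : ℝ :=
  (1 / 2) * (∑ i, ‖dxu u i (t, x)‖ ^ 2) + (μ / 4) * ‖u (t, x)‖ ^ 4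

def Gden (μ : ℝ) (u : ℝ × R2 → ℂ) (t : ℝ) (x : R2) : ℝ :=
  (∑ i, ((starRingEnd ℂ) (dxu u i (t, x)) *
      (D2 u (t, x) ((1:ℝ), (0:R2)) (0, EuclideanSpace.single i 1))).re)
  + μ * ‖u (t, x)‖ ^ 2 * ((starRingEnd ℂ) (u (t, x)) * ut u (t, x)).re

section PtWise2

variable {u : ℝ × R2 → ℂ} {a b : ℝ}
variable (hu : ContDiffOn ℝ (⊤ : ℕ∞) u (Set.Ioo a b ×ˢ Set.univ))

include hu in
lemma P5 {μ t : ℝ} (ht : t ∈ Set.Ioo a b) (x : R2) :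
    HasDerivAt (fun s => Fden μ u s x) (Gden μ u t x) t := by
  have h1 : HasDerivAt (fun s => ∑ i, ‖dxu u i (s, x)‖^2)
      (∑ i, 2 * ((starRingEnd ℂ) (dxu u i (t, x)) *
        (D2 u (t, x) ((1:ℝ), (0:R2)) (0, EuclideanSpace.single i 1))).re) t :=
    HasDerivAt.fun_sum fun i _ => hasDerivAt_normSq_c (P3 hu ht x i)
  have h2 : HasDerivAt (fun s => ‖u (s, x)‖^2)
      (2 * ((starRingEnd ℂ) (u (t, x)) * ut u (t, x)).re) t :=
    hasDerivAt_normSq_c (P2 hu ht x)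
  have h3 := h2.pow 2
  have h4 := ((h1.const_mul ((1:ℝ)/2)).add (h3.const_mul (μ/4)))
  have heq : (fun s => Fden μ u s x) =
      fun s => (1/2) * (∑ i, ‖dxu u i (s, x)‖^2) + (μ/4) * ((‖u (s, x)‖^2)^2) := by
    funext s
    unfold Fden
    ring
  rw [heq]
  refine h4.congr_deriv ?_
  simp [Gden, Finset.mul_sum]
  ring

include hu in
lemma Dsymm {t : ℝ} (ht : t ∈ Set.Ioo a b) (x : R2) (v w : ℝ × R2) :
    D2 u (t, x) v w = D2 u (t, x) w v :=
  ((cda hu ht x).isSymmSndFDerivAt (by norm_num)) v w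

include hu in
lemma laplacian_eq {t : ℝ} (ht : t ∈ Set.Ioo a b) (x : R2) :
    laplacian u t x =
      ∑ i, D2 u (t, x) (0, EuclideanSpace.single i 1) (0, EuclideanSpace.single i 1) := by
  unfold laplacian
  congr 1
  funext i
  have heq : (fun y => spatialDeriv u t y i) = fun y => dxu u i (t, y) :=
    funext fun y => P1 hu ht y i
  rw [heq]
  obtain ⟨L, hL, hv⟩ := P4b hu ht x i
  rw [hL.fderiv, hv]

lemma conj_mul_re_comm (z w : ℂ) :
    ((starRingEnd ℂ) z * w).re = ((starRingEnd ℂ) w * z).re := by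
  simp [Complex.mul_re, Complex.conj_re, Complex.conj_im]
  ring

include hu in
lemma P6 {μ t : ℝ}
    (hpde : ∀ t ∈ Set.Ioo a b, ∀ x : R2,
      Complex.I * deriv (fun s => u (s, x)) t + laplacian u t x =
        (μ : ℂ) * ((‖u (t, x)‖ ^ 2 : ℝ) : ℂ) * u (t, x))
    (ht : t ∈ Set.Ioo a b) (x : R2) :
    ∑ i, fderiv ℝ (fun y => qf u i (t, y)) x (EuclideanSpace.single i 1) = Gden μ u t x := by
  have hfd : ∀ i : Fin 2, fderiv ℝ (fun y => qf u i (t, y)) x (EuclideanSpace.single i 1) =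
      ((starRingEnd ℂ) (D2 u (t, x) ((1:ℝ),(0:R2)) (0, EuclideanSpace.single i 1)) *
        dxu u i (t, x)).re
      + ((starRingEnd ℂ) (ut u (t, x)) *
          D2 u (t, x) (0, EuclideanSpace.single i 1) (0, EuclideanSpace.single i 1)).re := by
    intro i
    obtain ⟨L, hL, hv⟩ := P4c hu ht x i
    rw [hL.fderiv, hv, Dsymm hu ht x (0, EuclideanSpace.single i 1) ((1:ℝ),(0:R2))]
  have hlap : laplacian u t x =
      (μ:ℂ) * ((‖u (t,x)‖^2 : ℝ) : ℂ) * u (t,x) - Complex.I * ut u (t,x) := by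
    have hp := hpde t ht x
    rw [(P2 hu ht x).deriv] at hp
    linear_combination hp
  have h2 : ∑ i, ((starRingEnd ℂ) (ut u (t, x)) *
      D2 u (t, x) (0, EuclideanSpace.single i 1) (0, EuclideanSpace.single i 1)).re
      = ((starRingEnd ℂ) (ut u (t, x)) * laplacian u t x).re := by
    rw [laplacian_eq hu ht x, Finset.mul_sum, Complex.re_sum]
  rw [Finset.sum_congr rfl (fun i _ => hfd i), Finset.sum_add_distrib, h2, hlap]
  unfold Gden
  rw [Finset.sum_congr rfl (fun i (_ : i ∈ Finset.univ) => conj_mul_re_comm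
    (D2 u (t, x) ((1:ℝ),(0:R2)) (0, EuclideanSpace.single i 1)) (dxu u i (t, x)))]
  congr 1
  set nv : ℝ := ‖u (t, x)‖ ^ 2 with hnv
  clear_value nv
  simp [Complex.mul_re, Complex.mul_im, Complex.conj_re, Complex.conj_im,
    Complex.sub_re, Complex.sub_im, Complex.ofReal_re, Complex.ofReal_im,
    Complex.I_re, Complex.I_im]
  ring
end PtWise2

/-! ### Decay bounds -/

lemma decay3 {C0 C3 r g : ℝ} (hr : 0 ≤ r) (hg : 0 ≤ g) (h0 : g ≤ C0) (h3 : r^3 * g ≤ C3) :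
    g ≤ 8*(C0+C3) * (1+r)^(-(3:ℝ)) := by
  have hpos : (0:ℝ) < 1 + r := by linarith
  have hC0 : 0 ≤ C0 := hg.trans h0
  have hC3 : 0 ≤ C3 := le_trans (by positivity) h3
  rw [show (-(3:ℝ)) = -((3:ℕ):ℝ) by norm_num, Real.rpow_neg hpos.le, Real.rpow_natCast,
    mul_comm _ ((1+r)^(3:ℕ))⁻¹, ← div_eq_inv_mul, le_div_iff₀ (by positivity)]
  have hrg : g * r ≤ C0 + C3 := by
    rcases le_total r 1 with h | h
    · nlinarith
    · nlinarith [pow_le_pow_right₀ h (show 1 ≤ 3 by norm_num)]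
  have hr2g : g * r^2 ≤ C0 + C3 := by
    rcases le_total r 1 with h | h
    · nlinarith
    · nlinarith
  nlinarith

lemma bound_flat {C r : ℝ} (hC : 0 ≤ C) (hr : 0 ≤ r) : C * (1+r)^(-(3:ℝ)) ≤ C := by
  nth_rewrite 2 [← mul_one C]
  gcongr
  exact Real.rpow_le_one_of_one_le_of_nonpos (by linarith) (by norm_num)

lemma norm_fderiv_le_iFD1 (u : ℝ × R2 → ℂ) (p : ℝ × R2) :
    ‖fderiv ℝ u p‖ ≤ ‖iteratedFDeriv ℝ 1 u p‖ := by
  refine ContinuousLinearMap.opNorm_le_bound _ (norm_nonneg _) fun v => ?_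
  have : fderiv ℝ u p v = iteratedFDeriv ℝ 1 u p (fun _ => v) := by
    rw [iteratedFDeriv_one_apply]
  rw [this]
  simpa using (iteratedFDeriv ℝ 1 u p).le_opNorm (fun _ => v)

lemma norm_D2_le_iFD2 (u : ℝ × R2 → ℂ) (p : ℝ × R2) :
    ‖D2 u p‖ ≤ ‖iteratedFDeriv ℝ 2 u p‖ := by
  refine ContinuousLinearMap.opNorm_le_bound _ (norm_nonneg _) fun v => ?_
  refine ContinuousLinearMap.opNorm_le_bound _ (by positivity) fun w => ?_
  have : D2 u p v w = iteratedFDeriv ℝ 2 u p ![v, w] := by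
    rw [iteratedFDeriv_two_apply]
    rfl
  rw [this]
  calc ‖iteratedFDeriv ℝ 2 u p ![v, w]‖ ≤ ‖iteratedFDeriv ℝ 2 u p‖ * ∏ i, ‖(![v, w]) i‖ :=
        (iteratedFDeriv ℝ 2 u p).le_opNorm _
  _ = ‖iteratedFDeriv ℝ 2 u p‖ * (‖v‖ * ‖w‖) := by
        rw [Fin.prod_univ_two]
        simp
  _ = ‖iteratedFDeriv ℝ 2 u p‖ * ‖v‖ * ‖w‖ := by ring

section Master

variable {u : ℝ × R2 → ℂ} {a b : ℝ}

lemma master (hdecay : ∀ (n k : ℕ) (c e : ℝ), Set.Icc c e ⊆ Set.Ioo a b →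
      ∃ C : ℝ, ∀ t ∈ Set.Icc c e, ∀ x : R2,
        ‖x‖ ^ k * ‖iteratedFDeriv ℝ n u (t, x)‖ ≤ C)
    {c e : ℝ} (hsub : Set.Icc c e ⊆ Set.Ioo a b) :
    ∃ C : ℝ, 0 ≤ C ∧ ∀ t ∈ Set.Icc c e, ∀ x : R2,
      ‖u (t, x)‖ ≤ C * (1+‖x‖)^(-(3:ℝ)) ∧
      ‖fderiv ℝ u (t, x)‖ ≤ C * (1+‖x‖)^(-(3:ℝ)) ∧
      ‖D2 u (t, x)‖ ≤ C * (1+‖x‖)^(-(3:ℝ)) := by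
  obtain ⟨C00, h00⟩ := hdecay 0 0 c e hsub
  obtain ⟨C03, h03⟩ := hdecay 0 3 c e hsub
  obtain ⟨C10, h10⟩ := hdecay 1 0 c e hsub
  obtain ⟨C13, h13⟩ := hdecay 1 3 c e hsub
  obtain ⟨C20, h20⟩ := hdecay 2 0 c e hsub
  obtain ⟨C23, h23⟩ := hdecay 2 3 c e hsub
  set M : ℝ := max (8*(C00+C03)) (max (8*(C10+C13)) (8*(C20+C23))) with hM
  rcases isEmpty_or_nonempty (Set.Icc c e) with hemp | ⟨⟨t₀, ht₀⟩⟩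
  · refine ⟨0, le_refl 0, fun t ht x => absurd ht ?_⟩
    exact fun h => hemp.elim' ⟨t, h⟩
  have hMnn : 0 ≤ M := by
    have := h00 t₀ ht₀ 0
    have := h03 t₀ ht₀ 0
    simp only [norm_iteratedFDeriv_zero] at this
    refine le_trans ?_ (le_max_left _ _)
    have h1 := h00 t₀ ht₀ 0
    simp only [pow_zero, one_mul, norm_iteratedFDeriv_zero] at h1
    have h2 := h03 t₀ ht₀ 0
    nlinarith [norm_nonneg (u (t₀, (0:R2))), norm_nonneg (0:R2),
      pow_nonneg (norm_nonneg (0:R2)) 3, mul_nonneg (pow_nonneg (norm_nonneg (0:R2)) 3) (norm_nonneg (iteratedFDeriv ℝ 0 u (t₀, (0:R2))))]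
  refine ⟨M, hMnn, fun t ht x => ?_⟩
  have key : ∀ (n : ℕ) (Ca Cb : ℝ),
      (∀ t ∈ Set.Icc c e, ∀ x : R2, ‖x‖ ^ 0 * ‖iteratedFDeriv ℝ n u (t, x)‖ ≤ Ca) →
      (∀ t ∈ Set.Icc c e, ∀ x : R2, ‖x‖ ^ 3 * ‖iteratedFDeriv ℝ n u (t, x)‖ ≤ Cb) →
      ‖iteratedFDeriv ℝ n u (t, x)‖ ≤ 8*(Ca+Cb) * (1+‖x‖)^(-(3:ℝ)) := by
    intro n Ca Cb ha hb
    refine decay3 (norm_nonneg _) (norm_nonneg _) ?_ ?_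
    · simpa using ha t ht x
    · exact hb t ht x
  have k0 := key 0 C00 C03 h00 h03
  have k1 := key 1 C10 C13 h10 h13
  have k2 := key 2 C20 C23 h20 h23
  have hmono : ∀ A B : ℝ, A ≤ B → A * (1+‖x‖)^(-(3:ℝ)) ≤ B * (1+‖x‖)^(-(3:ℝ)) := by
    intro A B h
    apply mul_le_mul_of_nonneg_right h (Real.rpow_nonneg (by positivity) _)
  refine ⟨?_, ?_, ?_⟩
  · rw [← norm_iteratedFDeriv_zero (𝕜 := ℝ) (f := u) (x := (t,x))]
    exact k0.trans (hmono _ _ (le_max_left _ _))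
  · exact ((norm_fderiv_le_iFD1 u (t,x)).trans k1).trans
      (hmono _ _ ((le_max_left _ _).trans (le_max_right _ _)))
  · exact ((norm_D2_le_iFD2 u (t,x)).trans k2).trans
      (hmono _ _ ((le_max_right _ _).trans (le_max_right _ _)))

end Master

/-! ### Norm helper lemmas -/

lemma re_conj_mul_le (z w : ℂ) : |((starRingEnd ℂ) z * w).re| ≤ ‖z‖ * ‖w‖ := by
  calc |((starRingEnd ℂ) z * w).re| ≤ ‖(starRingEnd ℂ) z * w‖ := by
        exact Complex.abs_re_le_norm _
  _ = ‖z‖ * ‖w‖ := by rw [norm_mul, RCLike.norm_conj]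

lemma norm_tvec : ‖((1:ℝ), (0:R2))‖ = 1 := by
  simp [Prod.norm_def]

lemma norm_xvec (i : Fin 2) : ‖((0:ℝ), EuclideanSpace.single i (1:ℝ))‖ = 1 := by
  simp [Prod.norm_def, EuclideanSpace.norm_single]

lemma dxu_le (u : ℝ × R2 → ℂ) (i : Fin 2) (p : ℝ × R2) :
    ‖dxu u i p‖ ≤ ‖fderiv ℝ u p‖ := by
  have := (fderiv ℝ u p).le_opNorm ((0:ℝ), EuclideanSpace.single i (1:ℝ))
  rw [norm_xvec, mul_one] at this
  exact this

lemma ut_le (u : ℝ × R2 → ℂ) (p : ℝ × R2) : ‖ut u p‖ ≤ ‖fderiv ℝ u p‖ := by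
  have := (fderiv ℝ u p).le_opNorm ((1:ℝ), (0:R2))
  rw [norm_tvec, mul_one] at this
  exact this

lemma D2_app_le (u : ℝ × R2 → ℂ) (p v w : ℝ × R2) :
    ‖D2 u p v w‖ ≤ ‖D2 u p‖ * ‖v‖ * ‖w‖ := by
  calc ‖D2 u p v w‖ ≤ ‖D2 u p v‖ * ‖w‖ := (D2 u p v).le_opNorm w
  _ ≤ ‖D2 u p‖ * ‖v‖ * ‖w‖ :=
    mul_le_mul_of_nonneg_right ((D2 u p).le_opNorm v) (norm_nonneg w)

/-! ### Bounds on the densities -/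

section Bounds

variable {u : ℝ × R2 → ℂ} {C : ℝ} {t : ℝ} {x : R2}

lemma d_nonneg : (0:ℝ) ≤ (1+‖x‖)^(-(3:ℝ)) := Real.rpow_nonneg (by positivity) _

lemma Fden_bound {μ : ℝ} (hC : 0 ≤ C)
    (hu0 : ‖u (t, x)‖ ≤ C * (1+‖x‖)^(-(3:ℝ)))
    (hu1 : ‖fderiv ℝ u (t, x)‖ ≤ C * (1+‖x‖)^(-(3:ℝ))) :
    ‖Fden μ u t x‖ ≤ (2*C^2 + |μ| * C^4 + 1) * (1+‖x‖)^(-(3:ℝ)) := by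
  set d : ℝ := (1+‖x‖)^(-(3:ℝ)) with hd
  have hd0 : 0 ≤ d := d_nonneg
  have hu0' : ‖u (t, x)‖ ≤ C := hu0.trans (bound_flat hC (norm_nonneg x))
  have hu1' : ‖fderiv ℝ u (t, x)‖ ≤ C := hu1.trans (bound_flat hC (norm_nonneg x))
  have hdx : ∀ i, ‖dxu u i (t, x)‖ ≤ C * d := fun i => (dxu_le u i (t,x)).trans hu1
  have hdx' : ∀ i, ‖dxu u i (t, x)‖ ≤ C := fun i => (dxu_le u i (t,x)).trans hu1'
  have h0 := norm_nonneg (u (t,x))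
  have h1 := norm_nonneg (dxu u 0 (t,x))
  have h2 := norm_nonneg (dxu u 1 (t,x))
  rw [Real.norm_eq_abs]
  unfold Fden
  rw [Fin.sum_univ_two]
  have e1 : ‖dxu u 0 (t,x)‖^2 ≤ C*(C*d) := by nlinarith [hdx 0, hdx' 0]
  have e2 : ‖dxu u 1 (t,x)‖^2 ≤ C*(C*d) := by nlinarith [hdx 1, hdx' 1]
  have e3 : ‖u (t,x)‖^4 ≤ C^3*(C*d) := by nlinarith [pow_le_pow_left₀ h0 hu0' 3, pow_nonneg h0 3, pow_nonneg hC 3]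
  have habs : |1/2 * (‖dxu u 0 (t,x)‖^2 + ‖dxu u 1 (t,x)‖^2) + μ/4 * ‖u (t,x)‖^4|
      ≤ 1/2 * (‖dxu u 0 (t,x)‖^2 + ‖dxu u 1 (t,x)‖^2) + |μ|/4 * ‖u (t,x)‖^4 := by
    refine (abs_add_le _ _).trans ?_
    rw [abs_of_nonneg (by positivity), abs_mul, abs_div]
    simp [abs_of_nonneg (pow_nonneg h0 4)]
  refine habs.trans ?_
  nlinarith [mul_le_mul_of_nonneg_left e3 (by positivity : (0:ℝ) ≤ |μ|/4),
    mul_nonneg (mul_nonneg hC hC) hd0, mul_nonneg (abs_nonneg μ) (mul_nonneg (mul_nonneg (mul_nonneg hC hC) (mul_nonneg hC hC)) hd0), hd0]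

lemma Gden_bound {μ : ℝ} (hC : 0 ≤ C)
    (hu0 : ‖u (t, x)‖ ≤ C * (1+‖x‖)^(-(3:ℝ)))
    (hu1 : ‖fderiv ℝ u (t, x)‖ ≤ C * (1+‖x‖)^(-(3:ℝ)))
    (hu2 : ‖D2 u (t, x)‖ ≤ C * (1+‖x‖)^(-(3:ℝ))) :
    ‖Gden μ u t x‖ ≤ (2*C^2 + |μ| * C^4 + 1) * (1+‖x‖)^(-(3:ℝ)) := by
  set d : ℝ := (1+‖x‖)^(-(3:ℝ)) with hd
  have hd0 : 0 ≤ d := d_nonneg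
  have hu0' : ‖u (t, x)‖ ≤ C := hu0.trans (bound_flat hC (norm_nonneg x))
  have hu1' : ‖fderiv ℝ u (t, x)‖ ≤ C := hu1.trans (bound_flat hC (norm_nonneg x))
  have h0 := norm_nonneg (u (t,x))
  have hterm : ∀ i : Fin 2, |((starRingEnd ℂ) (dxu u i (t, x)) *
      (D2 u (t, x) ((1:ℝ), (0:R2)) (0, EuclideanSpace.single i 1))).re| ≤ C * (C * d) := by
    intro i
    refine (re_conj_mul_le _ _).trans ?_
    have hb1 : ‖dxu u i (t,x)‖ ≤ C := (dxu_le u i (t,x)).trans hu1'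
    have hb2 : ‖D2 u (t, x) ((1:ℝ), (0:R2)) (0, EuclideanSpace.single i 1)‖ ≤ C * d := by
      have := D2_app_le u (t,x) ((1:ℝ), (0:R2)) (0, EuclideanSpace.single i 1)
      rw [norm_tvec, norm_xvec, mul_one, mul_one] at this
      exact this.trans hu2
    exact mul_le_mul hb1 hb2 (norm_nonneg _) hC
  have hterm2 : |μ * ‖u (t, x)‖^2 * ((starRingEnd ℂ) (u (t, x)) * ut u (t, x)).re|
      ≤ |μ| * C^2 * (C * (C * d)) := by
    rw [abs_mul, abs_mul]
    have h1 : |‖u (t,x)‖^2| ≤ C^2 := by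
      rw [abs_of_nonneg (by positivity)]; nlinarith
    have h2 : |((starRingEnd ℂ) (u (t, x)) * ut u (t, x)).re| ≤ C * (C * d) := by
      refine (re_conj_mul_le _ _).trans ?_
      exact mul_le_mul hu0' ((ut_le u (t,x)).trans hu1) (norm_nonneg _) hC
    have := mul_le_mul (mul_le_mul (le_refl |μ|) h1 (abs_nonneg _) (abs_nonneg μ)) h2 (abs_nonneg _) (by positivity)
    exact this
  rw [Real.norm_eq_abs]
  unfold Gden
  rw [Fin.sum_univ_two]
  refine (abs_add_le _ _).trans ?_
  refine (add_le_add ((abs_add_le _ _).trans (add_le_add (hterm 0) (hterm 1))) hterm2).trans ?_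
  nlinarith [mul_nonneg (mul_nonneg hC hC) hd0, hd0,
    mul_nonneg (abs_nonneg μ) (mul_nonneg (mul_nonneg (mul_nonneg hC hC) (mul_nonneg hC hC)) hd0)]

lemma qf_bound (hC : 0 ≤ C)
    (hu1 : ‖fderiv ℝ u (t, x)‖ ≤ C * (1+‖x‖)^(-(3:ℝ)))
    (i : Fin 2) :
    |qf u i (t, x)| ≤ (2*C^2 + 1) * (1+‖x‖)^(-(3:ℝ)) := by
  set d : ℝ := (1+‖x‖)^(-(3:ℝ)) with hd
  have hd0 : 0 ≤ d := d_nonneg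
  have hu1' : ‖fderiv ℝ u (t, x)‖ ≤ C := hu1.trans (bound_flat hC (norm_nonneg x))
  unfold qf
  refine (re_conj_mul_le _ _).trans ?_
  have h1 : ‖ut u (t,x)‖ ≤ C := (ut_le u (t,x)).trans hu1'
  have h2 : ‖dxu u i (t,x)‖ ≤ C * d := (dxu_le u i (t,x)).trans hu1
  nlinarith [mul_le_mul h1 h2 (norm_nonneg _) hC, mul_nonneg (mul_nonneg hC hC) hd0]

end Bounds

/-! ### Continuity of densities -/

section Cont

variable {u : ℝ × R2 → ℂ} {a b : ℝ}
variable (hu : ContDiffOn ℝ (⊤ : ℕ∞) u (Set.Ioo a b ×ˢ Set.univ))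

include hu in
lemma cont_Fden (μ : ℝ) {t : ℝ} (ht : t ∈ Set.Ioo a b) :
    Continuous (fun x => Fden μ u t x) := by
  unfold Fden
  have h1 : Continuous fun x : R2 => ∑ i, ‖dxu u i (t, x)‖^2 :=
    continuous_finset_sum _ fun i _ => ((slice_dxu_contDiff hu ht i).continuous.norm.pow 2)
  have h2 : Continuous fun x : R2 => ‖u (t, x)‖^4 := (slice_u_contDiff hu ht).continuous.norm.pow 4
  exact ((continuous_const.mul h1)).add (continuous_const.mul h2)

include hu in
lemma cont_Gden (μ : ℝ) {t : ℝ} (ht : t ∈ Set.Ioo a b) :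
    Continuous (fun x => Gden μ u t x) := by
  unfold Gden
  have hD2 : ∀ i : Fin 2, Continuous fun x : R2 =>
      D2 u (t, x) ((1:ℝ), (0:R2)) (0, EuclideanSpace.single i 1) := fun i =>
    ((slice_D2_contDiff hu ht).continuous.clm_apply continuous_const).clm_apply continuous_const
  have h1 : Continuous fun x : R2 => ∑ i, ((starRingEnd ℂ) (dxu u i (t, x)) *
      D2 u (t, x) ((1:ℝ), (0:R2)) (0, EuclideanSpace.single i 1)).re :=
    continuous_finset_sum _ fun i _ =>
      Complex.continuous_re.comp
        (((continuous_star.comp (slice_dxu_contDiff hu ht i).continuous)).mul (hD2 i))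
  have h2 : Continuous fun x : R2 => μ * ‖u (t, x)‖^2 *
      ((starRingEnd ℂ) (u (t, x)) * ut u (t, x)).re :=
    ((continuous_const.mul ((slice_u_contDiff hu ht).continuous.norm.pow 2))).mul
      (Complex.continuous_re.comp
        ((continuous_star.comp (slice_u_contDiff hu ht).continuous).mul
          (slice_ut_contDiff hu ht).continuous))
  exact h1.add h2

include hu in
lemma qf_fderiv_bound {μC : ℝ} {t : ℝ} (ht : t ∈ Set.Ioo a b) {x : R2} (hC : 0 ≤ μC)
    (hu1 : ‖fderiv ℝ u (t, x)‖ ≤ μC * (1+‖x‖)^(-(3:ℝ)))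
    (hu2 : ‖D2 u (t, x)‖ ≤ μC * (1+‖x‖)^(-(3:ℝ))) (i j : Fin 2) :
    ‖fderiv ℝ (fun y => qf u i (t, y)) x (EuclideanSpace.single j 1)‖ ≤
      (2*μC^2 + 1) * (1+‖x‖)^(-(3:ℝ)) := by
  set d : ℝ := (1+‖x‖)^(-(3:ℝ)) with hd
  have hd0 : 0 ≤ d := d_nonneg
  have hu1' : ‖fderiv ℝ u (t, x)‖ ≤ μC := hu1.trans (bound_flat hC (norm_nonneg x))
  obtain ⟨L, hL, hv⟩ := P4c hu ht x i
  rw [hL.fderiv, hv]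
  have hD2a : ‖D2 u (t, x) (0, EuclideanSpace.single j 1) ((1:ℝ), (0:R2))‖ ≤ μC * d := by
    have := D2_app_le u (t,x) (0, EuclideanSpace.single j 1) ((1:ℝ), (0:R2))
    rw [norm_tvec, norm_xvec, mul_one, mul_one] at this
    exact this.trans hu2
  have hD2b : ‖D2 u (t, x) (0, EuclideanSpace.single j 1) (0, EuclideanSpace.single i 1)‖ ≤ μC * d := by
    have := D2_app_le u (t,x) (0, EuclideanSpace.single j 1) (0, EuclideanSpace.single i 1)
    rw [norm_xvec, norm_xvec, mul_one, mul_one] at this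
    exact this.trans hu2
  have t1 : |((starRingEnd ℂ) (D2 u (t, x) (0, EuclideanSpace.single j 1) ((1:ℝ), (0:R2))) *
      dxu u i (t, x)).re| ≤ (μC * d) * μC :=
    (re_conj_mul_le _ _).trans
      (mul_le_mul hD2a ((dxu_le u i (t,x)).trans hu1') (norm_nonneg _) (by positivity))
  have t2 : |((starRingEnd ℂ) (ut u (t, x)) *
      D2 u (t, x) (0, EuclideanSpace.single j 1) (0, EuclideanSpace.single i 1)).re| ≤ μC * (μC * d) :=
    (re_conj_mul_le _ _).trans
      (mul_le_mul ((ut_le u (t,x)).trans hu1') hD2b (norm_nonneg _) hC)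
  rw [Real.norm_eq_abs]
  refine (abs_add_le _ _).trans ?_
  nlinarith [hd0, mul_nonneg (mul_nonneg hC hC) hd0]

end Cont

/-! ### Main derivative computation -/

section Main

variable {u : ℝ × R2 → ℂ} {a b μ : ℝ}

lemma energy_hasDeriv
    (hu : ContDiffOn ℝ (⊤ : ℕ∞) u (Set.Ioo a b ×ˢ Set.univ))
    (hpde : ∀ t ∈ Set.Ioo a b, ∀ x : R2,
      Complex.I * deriv (fun s => u (s, x)) t + laplacian u t x =
        (μ : ℂ) * ((‖u (t, x)‖ ^ 2 : ℝ) : ℂ) * u (t, x))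
    (hdecay : ∀ (n k : ℕ) (c e : ℝ), Set.Icc c e ⊆ Set.Ioo a b →
      ∃ C : ℝ, ∀ t ∈ Set.Icc c e, ∀ x : R2,
        ‖x‖ ^ k * ‖iteratedFDeriv ℝ n u (t, x)‖ ≤ C) :
    ∀ t ∈ Set.Ioo a b, HasDerivAt (energy μ u) 0 t := by
  intro t ht
  obtain ⟨hta, htb⟩ := ht
  have ht : t ∈ Set.Ioo a b := ⟨hta, htb⟩
  set c : ℝ := (a+t)/2 with hcdef
  set e : ℝ := (t+b)/2 with hedef
  have hce : Set.Icc c e ⊆ Set.Ioo a b := fun s hs => ⟨by rcases hs with ⟨h1, h2⟩; simp only [hcdef] at h1; linarith,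
    by rcases hs with ⟨h1, h2⟩; simp only [hedef] at h2; linarith⟩
  have htIcc : t ∈ Set.Icc c e := ⟨by simp only [hcdef]; linarith, by simp only [hedef]; linarith⟩
  obtain ⟨C, hC0, hC⟩ := master hdecay hce
  set K : ℝ := 2*C^2 + |μ| * C^4 + 1 with hKdef
  set ε : ℝ := min (t-c) (e-t) with hεdef
  have hε : 0 < ε := by
    apply lt_min
    · simp only [hcdef]; linarith
    · simp only [hedef]; linarith
  have hball : Metric.ball t ε ⊆ Set.Icc c e := by
    intro s hs
    rw [Metric.mem_ball, Real.dist_eq] at hs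
    have h1 := abs_lt.mp hs
    have h2 := min_le_left (t-c) (e-t)
    have h3 := min_le_right (t-c) (e-t)
    exact ⟨by linarith, by linarith⟩
  have hballI : ∀ s ∈ Metric.ball t ε, s ∈ Set.Ioo a b := fun s hs => hce (hball hs)
  set F : ℝ → R2 → ℝ := fun s x =>
    (1 / 2) * (∑ i, ‖spatialDeriv u s x i‖ ^ 2) + (μ / 4) * ‖u (s, x)‖ ^ 4 with hFdef
  have hFeq : ∀ s ∈ Set.Ioo a b, ∀ x : R2, F s x = Fden μ u s x := by
    intro s hs x
    simp only [hFdef]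
    unfold Fden
    rw [Finset.sum_congr rfl fun i _ => by rw [P1 hu hs x i]]
  set bound : R2 → ℝ := fun x => K * (1+‖x‖)^(-(3:ℝ)) with hbounddef
  have hbound_int : Integrable bound :=
    (integrable_one_add_norm (μ := volume) (E := R2) (r := 3) (by simp; norm_num)).const_mul K
  have h1 : ∀ᶠ s in nhds t, AEStronglyMeasurable (F s) volume := by
    filter_upwards [Metric.ball_mem_nhds t hε] with s hs
    have heq : F s = fun x => Fden μ u s x := funext fun x => hFeq s (hballI s hs) x
    rw [heq]
    exact (cont_Fden hu μ (hballI s hs)).aestronglyMeasurable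
  have hFt_int : Integrable (F t) := by
    refine hbound_int.mono' ?_ (Filter.Eventually.of_forall fun x => ?_)
    · have heq : F t = fun x => Fden μ u t x := funext fun x => hFeq t ht x
      rw [heq]
      exact (cont_Fden hu μ ht).aestronglyMeasurable
    · rw [hFeq t ht x]
      exact (Fden_bound hC0 (hC t htIcc x).1 (hC t htIcc x).2.1)
  have hG_meas : AEStronglyMeasurable (fun x => Gden μ u t x) volume :=
    (cont_Gden hu μ ht).aestronglyMeasurable
  have h_bound : ∀ᵐ x : R2, ∀ s ∈ Metric.ball t ε, ‖Gden μ u s x‖ ≤ bound x :=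
    Filter.Eventually.of_forall fun x s hs => by
      obtain ⟨hb1, hb2, hb3⟩ := hC s (hball hs) x
      exact Gden_bound hC0 hb1 hb2 hb3
  have h_diff : ∀ᵐ x : R2, ∀ s ∈ Metric.ball t ε, HasDerivAt (F · x) (Gden μ u s x) s :=
    Filter.Eventually.of_forall fun x s hs => by
      have hs' := hballI s hs
      refine (P5 hu hs' x).congr_of_eventuallyEq ?_
      filter_upwards [isOpen_Ioo.mem_nhds hs'] with r hr
      exact hFeq r hr x
  obtain ⟨-, hder⟩ := hasDerivAt_integral_of_dominated_loc_of_deriv_le (Metric.ball_mem_nhds t hε) h1 hFt_int hG_meas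
    h_bound hbound_int h_diff
  have hzero : ∫ x : R2, Gden μ u t x = 0 := by
    have hInt : ∀ i : Fin 2, Integrable (fun x : R2 =>
        fderiv ℝ (fun y => qf u i (t, y)) x (EuclideanSpace.single i 1)) := by
      intro i
      refine ((integrable_one_add_norm (μ := volume) (E := R2) (r := 3)
        (by simp; norm_num)).const_mul (2*C^2+1)).mono'
        ((((slice_qf_contDiff hu ht i).continuous_fderiv one_ne_zero).clm_apply
          continuous_const).aestronglyMeasurable)
        (Filter.Eventually.of_forall fun x => ?_)
      exact qf_fderiv_bound hu ht hC0 (hC t htIcc x).2.1 (hC t htIcc x).2.2 i i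
    have hcongr : ∫ x : R2, Gden μ u t x = ∫ x : R2, ∑ i : Fin 2,
        fderiv ℝ (fun y => qf u i (t, y)) x (EuclideanSpace.single i 1) :=
      integral_congr_ae (Filter.Eventually.of_forall fun x => (P6 hu hpde ht x).symm)
    rw [hcongr, integral_finset_sum _ (fun i _ => hInt i)]
    refine Finset.sum_eq_zero fun i _ => ?_
    refine integral_fderiv_single_zero _ (2*C^2+1) i
      ((slice_qf_contDiff hu ht i)) (fun x => ?_) (fun x => ?_)
    · exact qf_bound hC0 (hC t htIcc x).2.1 i
    · exact qf_fderiv_bound hu ht hC0 (hC t htIcc x).2.1 (hC t htIcc x).2.2 i i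
  rw [hzero] at hder
  exact hder

end Main

/-- Conservation of energy for smooth, spatially rapidly decaying solutions of the cubic
NLS `i uₜ + Δu = μ|u|²u` on an open interval `I = (a, b)`:
`E(u(t)) = ∫ (1/2)|∇u(t,x)|² + (μ/4)|u(t,x)|⁴ dx` is constant on `I`. -/
theorem energy_conservation (μ : ℝ) (a b : ℝ)
    (u : ℝ × R2 → ℂ)
    (hu : ContDiffOn ℝ (⊤ : ℕ∞) u (Set.Ioo a b ×ˢ Set.univ))
    (hpde : ∀ t ∈ Set.Ioo a b, ∀ x : R2,
      Complex.I * deriv (fun s => u (s, x)) t + laplacian u t x =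
        (μ : ℂ) * ((‖u (t, x)‖ ^ 2 : ℝ) : ℂ) * u (t, x))
    (hdecay : ∀ (n k : ℕ) (c e : ℝ), Set.Icc c e ⊆ Set.Ioo a b →
      ∃ C : ℝ, ∀ t ∈ Set.Icc c e, ∀ x : R2,
        ‖x‖ ^ k * ‖iteratedFDeriv ℝ n u (t, x)‖ ≤ C) :
    ∀ t₁ ∈ Set.Ioo a b, ∀ t₂ ∈ Set.Ioo a b,
      energy μ u t₁ = energy μ u t₂ := by
  have H : ∀ t ∈ Set.Ioo a b, HasDerivAt (energy μ u) 0 t := energy_hasDeriv hu hpde hdecay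
  have key : ∀ t₁ t₂ : ℝ, t₁ ∈ Set.Ioo a b → t₂ ∈ Set.Ioo a b → t₁ ≤ t₂ →
      energy μ u t₁ = energy μ u t₂ := by
    intro t₁ t₂ h₁ h₂ hle
    rcases eq_or_lt_of_le hle with rfl | hlt
    · rfl
    have hsub : Set.Icc t₁ t₂ ⊆ Set.Ioo a b := fun s hs =>
      ⟨lt_of_lt_of_le h₁.1 hs.1, lt_of_le_of_lt hs.2 h₂.2⟩
    have hdiff : DifferentiableOn ℝ (energy μ u) (Set.Icc t₁ t₂) := fun s hs =>
      ((H s (hsub hs)).differentiableAt).differentiableWithinAt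
    have hderiv : ∀ s ∈ Set.Ico t₁ t₂, derivWithin (energy μ u) (Set.Icc t₁ t₂) s = 0 := by
      intro s hs
      exact ((H s (hsub ⟨hs.1, hs.2.le⟩)).hasDerivWithinAt).derivWithin
        ((uniqueDiffOn_Icc hlt) s ⟨hs.1, hs.2.le⟩)
    exact (constant_of_derivWithin_zero hdiff hderiv t₂ (Set.right_mem_Icc.2 hle)).symm
  intro t₁ ht₁ t₂ ht₂
  rcases le_total t₁ t₂ with h | h
  · exact key _ _ ht₁ ht₂ h
  · exact (key _ _ ht₂ ht₁ h).symm
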